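/- Let f be a binary nonic with coefficients a_i (f = ∑ C(9,i) a_i x^{9−i} y^i), a_7 = a_8 = 0. Suppose the covariant l = (f,f)_8 vanishes and q = (f,f)_6 = x^5 y. Write c for the coefficient of y² in l and d_i for the coefficient of x^i y^{6−i} in q (so c = 0, d_0 = ... = d_4 = 0, d_5 ≠ 0 (suitably normalized), d_6 = 0). Then the polynomial identity 5 d_5 a_9 = −75 a_4 d_0 + 45 a_5 d_1 − a_6 (9c + 22 d_2) holds in ℤ[a_0,...,a_9], and consequently a_9 = 0; then a_4 = a_5 = a_6 = 0 and d_5 = 0, a contradiction. Hence no binary nonic with a_7 = a_8 = 0 has l = 0 and q = x^5 y (up to scalar). -/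

import Mathlib

open MvPolynomial

/-- Iterated partial derivative `∂^a/∂x^a ∂^b/∂y^b`. -/
noncomputable def dxy (a b : ℕ) (g : MvPolynomial (Fin 2) ℂ) : MvPolynomial (Fin 2) ℂ :=
  (⇑(pderiv (0 : Fin 2)))^[a] ((⇑(pderiv (1 : Fin 2)))^[b] g)

/-- The `p`-th transvectant of `g ∈ V_m` and `h ∈ V_n`. -/
noncomputable def transv (m n p : ℕ) (g h : MvPolynomial (Fin 2) ℂ) : MvPolynomial (Fin 2) ℂ :=
  (((m - p).factorial * (n - p).factorial : ℂ) / ((m.factorial : ℂ) * n.factorial)) •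
    ∑ i ∈ Finset.range (p + 1),
      ((-1 : ℂ) ^ i * (p.choose i : ℂ)) • (dxy (p - i) i g * dxy i (p - i) h)

/-! With `a₇ = a₈ = 0`, the coefficients `c, d₀, d₁, d₂, d₄, d₅` are explicit quadratic forms in
the remaining `aᵢ`, obtained by expanding the transvectants monomial by monomial, and the syzygy
is a ring identity between them. If `l = 0` and `q = s x⁵y` with `s ≠ 0`, then
`c = d₀ = d₁ = d₂ = d₄ = 0` and `d₅ = s`, so the syzygy forces `a₉ = 0`; then `d₀`, `c` and `d₄`
give in turn `a₆ = a₅ = a₄ = 0`, whence `d₅ = 0`, a contradiction. -/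

lemma dxy_eq_pow_mul_pow (u v : ℕ) :
    dxy u v = ⇑((pderiv (R := ℂ) (0 : Fin 2)).toLinearMap ^ u *
      (pderiv (R := ℂ) (1 : Fin 2)).toLinearMap ^ v) := by
  ext1 g
  simp [dxy, Module.End.mul_apply, Module.End.pow_apply]

lemma dxy_C_mul (u v : ℕ) (r : ℂ) (g : MvPolynomial (Fin 2) ℂ) :
    dxy u v (C r * g) = C r * dxy u v g := by
  simp only [dxy_eq_pow_mul_pow, C_mul', map_smul]

lemma dxy_sum {ι : Type*} (u v : ℕ) (s : Finset ι) (g : ι → MvPolynomial (Fin 2) ℂ) :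
    dxy u v (∑ i ∈ s, g i) = ∑ i ∈ s, dxy u v (g i) := by
  simp only [dxy_eq_pow_mul_pow, map_sum]

lemma pderiv_X_pow_mul_X_pow (n m : ℕ) :
    pderiv 0 ((X 0 : MvPolynomial (Fin 2) ℂ) ^ n * X 1 ^ m) =
        C (n : ℂ) * (X 0 ^ (n - 1) * X 1 ^ m) ∧
      pderiv 1 ((X 0 : MvPolynomial (Fin 2) ℂ) ^ n * X 1 ^ m) =
        C (m : ℂ) * (X 0 ^ n * X 1 ^ (m - 1)) := by
  simp only [pderiv_mul, pderiv_pow, pderiv_X_self, pderiv_X_of_ne (by decide : (0 : Fin 2) ≠ 1),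
    pderiv_X_of_ne (by decide : (1 : Fin 2) ≠ 0), map_natCast]
  constructor <;> ring

lemma dxy_X_pow_mul_X_pow (u v n m : ℕ) :
    dxy u v ((X 0 : MvPolynomial (Fin 2) ℂ) ^ n * X 1 ^ m) =
      C ((n.descFactorial u * m.descFactorial v : ℕ) : ℂ) *
        (X 0 ^ (n - u) * X 1 ^ (m - v)) := by
  induction u with
  | zero =>
    induction v with
    | zero => simp [dxy]
    | succ v ih =>
      rw [dxy, Function.iterate_zero_apply, Function.iterate_succ_apply'] at *
      rw [ih, pderiv_C_mul, (pderiv_X_pow_mul_X_pow _ _).2, Nat.descFactorial_succ, Nat.sub_sub]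
      push_cast
      simp only [C_mul]
      ring
  | succ u ih =>
    rw [dxy, Function.iterate_succ_apply', ← dxy, ih, pderiv_C_mul,
      (pderiv_X_pow_mul_X_pow _ _).1, Nat.descFactorial_succ, Nat.sub_sub]
    push_cast
    simp only [C_mul]
    ring

lemma coeff_C_mul_X_pow_mul_X_pow (r : ℂ) (α β A B : ℕ) :
    coeff (Finsupp.single 0 A + Finsupp.single 1 B)
      (C r * ((X 0 : MvPolynomial (Fin 2) ℂ) ^ α * X 1 ^ β)) =
      if α = A ∧ β = B then r else 0 := by
  rw [X_pow_eq_monomial, X_pow_eq_monomial, monomial_mul, C_mul_monomial, mul_one, mul_one,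
    coeff_monomial]
  simp [Finsupp.ext_iff, Fin.forall_fin_two]

noncomputable def binaryForm (n : ℕ) (a : ℕ → ℂ) : MvPolynomial (Fin 2) ℂ :=
  ∑ i ∈ Finset.range (n + 1), C ((n.choose i : ℂ) * a i) * X 0 ^ (n - i) * X 1 ^ i

section BinaryForm

variable (n : ℕ) (a : ℕ → ℂ)

lemma dxy_binaryForm (u v : ℕ) :
    dxy u v (binaryForm n a) = ∑ i ∈ Finset.range (n + 1),
      C ((n.choose i : ℂ) * a i * (((n - i).descFactorial u * i.descFactorial v : ℕ) : ℂ)) *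
        (X 0 ^ (n - i - u) * X 1 ^ (i - v)) := by
  rw [binaryForm, dxy_sum]
  refine Finset.sum_congr rfl fun i _ => ?_
  rw [mul_assoc, dxy_C_mul, dxy_X_pow_mul_X_pow, ← mul_assoc, ← C_mul]

lemma coeff_dxy_mul_dxy_binaryForm (u v u' v' A B : ℕ) :
    coeff (Finsupp.single 0 A + Finsupp.single 1 B)
      (dxy u v (binaryForm n a) * dxy u' v' (binaryForm n a)) =
    ∑ j ∈ Finset.range (n + 1), ∑ k ∈ Finset.range (n + 1),
      if n - j - u + (n - k - u') = A ∧ j - v + (k - v') = B then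
        (n.choose j : ℂ) * a j * (((n - j).descFactorial u * j.descFactorial v : ℕ) : ℂ) *
          ((n.choose k : ℂ) * a k * (((n - k).descFactorial u' * k.descFactorial v' : ℕ) : ℂ))
      else 0 := by
  simp only [dxy_binaryForm, Finset.sum_mul_sum, coeff_sum]
  refine Finset.sum_congr rfl fun j _ => Finset.sum_congr rfl fun k _ => ?_
  rw [← coeff_C_mul_X_pow_mul_X_pow]
  congr 1
  simp only [C_mul, pow_add]
  ring

lemma coeff_transv_binaryForm (p A B : ℕ) :
    coeff (Finsupp.single 0 A + Finsupp.single 1 B)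
        (transv n n p (binaryForm n a) (binaryForm n a)) =
      ((n - p).factorial * (n - p).factorial : ℂ) / ((n.factorial : ℂ) * n.factorial) *
        ∑ i ∈ Finset.range (p + 1), (-1 : ℂ) ^ i * (p.choose i : ℂ) *
          ∑ j ∈ Finset.range (n + 1), ∑ k ∈ Finset.range (n + 1),
            if n - j - (p - i) + (n - k - i) = A ∧ j - i + (k - (p - i)) = B then
              (n.choose j : ℂ) * a j *
                  (((n - j).descFactorial (p - i) * j.descFactorial i : ℕ) : ℂ) *
                ((n.choose k : ℂ) * a k *
                  (((n - k).descFactorial i * k.descFactorial (p - i) : ℕ) : ℂ))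
            else 0 := by
  simp only [transv, coeff_smul, coeff_sum, coeff_dxy_mul_dxy_binaryForm, smul_eq_mul]

end BinaryForm

lemma coeff_y_sq_transv_eight_nonic (a : ℕ → ℂ) (h7 : a 7 = 0) (h8 : a 8 = 0) :
    coeff (Finsupp.single 1 2) (transv 9 9 8 (binaryForm 9 a) (binaryForm 9 a)) =
      70 * a 5 ^ 2 - 112 * a 4 * a 6 + 2 * a 1 * a 9 := by
  rw [← zero_add (Finsupp.single 1 2), ← Finsupp.single_zero 0, coeff_transv_binaryForm]
  simp only [Finset.sum_range_succ, Finset.sum_range_zero]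
  norm_num [h7, h8, Nat.descFactorial, Nat.factorial, Nat.choose]
  ring

set_option maxHeartbeats 2000000 in
lemma coeffs_transv_six_nonic (a : ℕ → ℂ) (h7 : a 7 = 0) (h8 : a 8 = 0) (d : ℕ → ℂ)
    (hd : ∀ i ≤ 6, d i = coeff (Finsupp.single 0 i + Finsupp.single 1 (6 - i))
      (transv 9 9 6 (binaryForm 9 a) (binaryForm 9 a))) :
    d 0 = -20 * a 6 ^ 2 + 2 * a 3 * a 9 ∧
    d 1 = -30 * a 5 * a 6 + 6 * a 2 * a 9 ∧
    d 2 = -90 * a 5 ^ 2 + 114 * a 4 * a 6 + 6 * a 1 * a 9 ∧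
    d 4 = -90 * a 4 ^ 2 + 114 * a 3 * a 5 - 12 * a 2 * a 6 ∧
    d 5 = -30 * a 3 * a 4 + 54 * a 2 * a 5 - 30 * a 1 * a 6 := by
  refine ⟨?_, ?_, ?_, ?_, ?_⟩ <;>
  · rw [hd _ (by norm_num), coeff_transv_binaryForm]
    simp only [Finset.sum_range_succ, Finset.sum_range_zero]
    norm_num [h7, h8, Nat.descFactorial, Nat.factorial, Nat.choose]
    ring

lemma nonic_d_five_eq_zero (a : ℕ → ℂ)
    (hc : 70 * a 5 ^ 2 - 112 * a 4 * a 6 + 2 * a 1 * a 9 = 0)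
    (hd0 : -20 * a 6 ^ 2 + 2 * a 3 * a 9 = 0)
    (hd1 : -30 * a 5 * a 6 + 6 * a 2 * a 9 = 0)
    (hd2 : -90 * a 5 ^ 2 + 114 * a 4 * a 6 + 6 * a 1 * a 9 = 0)
    (hd4 : -90 * a 4 ^ 2 + 114 * a 3 * a 5 - 12 * a 2 * a 6 = 0) :
    -30 * a 3 * a 4 + 54 * a 2 * a 5 - 30 * a 1 * a 6 = 0 := by
  by_contra hd5
  have ha9 : a 9 = 0 := by
    refine (mul_eq_zero.1 ?_).resolve_left (mul_ne_zero (by norm_num : (5 : ℂ) ≠ 0) hd5)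
    linear_combination -75 * a 4 * hd0 + 45 * a 5 * hd1 - a 6 * (9 * hc + 22 * hd2)
  have ha6 : a 6 = 0 := pow_eq_zero_iff two_ne_zero |>.1 <| by
    linear_combination (-1 / 20 : ℂ) * hd0 + a 3 / 10 * ha9
  have ha5 : a 5 = 0 := pow_eq_zero_iff two_ne_zero |>.1 <| by
    linear_combination (1 / 70 : ℂ) * hc + (112 * a 4 / 70) * ha6 - (2 * a 1 / 70) * ha9
  have ha4 : a 4 = 0 := pow_eq_zero_iff two_ne_zero |>.1 <| by
    linear_combination (-1 / 90 : ℂ) * hd4 + (114 * a 3 / 90) * ha5 - (12 * a 2 / 90) * ha6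
  exact hd5 (by rw [ha4, ha5, ha6]; ring)

/-- Case 2 of the nonic nullform lemma: for a binary nonic with `a₇ = a₈ = 0`, writing
`c` for the coefficient of `y²` in `l = (f,f)_8` and `dᵢ` for the coefficient of `xⁱy^(6-i)`
in `q = (f,f)_6`, the syzygy `5 d₅ a₉ = −75 a₄ d₀ + 45 a₅ d₁ − a₆(9c + 22 d₂)` holds;
consequently no such nonic has `l = 0` and `q` a nonzero scalar multiple of `x⁵y`. -/
theorem nonic_case_x5y (a : ℕ → ℂ) (h7 : a 7 = 0) (h8 : a 8 = 0)
    (f l q : MvPolynomial (Fin 2) ℂ)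
    (hf : f = ∑ i ∈ Finset.range 10, C ((Nat.choose 9 i : ℂ) * a i) * X 0 ^ (9 - i) * X 1 ^ i)
    (hl : l = transv 9 9 8 f f) (hq : q = transv 9 9 6 f f)
    (c : ℂ) (hc : c = MvPolynomial.coeff (Finsupp.single 1 2) l)
    (d : ℕ → ℂ)
    (hd : ∀ i ≤ 6, d i =
      MvPolynomial.coeff (Finsupp.single (0 : Fin 2) i + Finsupp.single 1 (6 - i)) q) :
    5 * d 5 * a 9 = -75 * a 4 * d 0 + 45 * a 5 * d 1 - a 6 * (9 * c + 22 * d 2) ∧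
      ¬ (l = 0 ∧ ∃ s : ℂ, s ≠ 0 ∧ q = C s * (X 0 ^ 5 * X 1)) := by
  replace hf : f = binaryForm 9 a := hf
  subst hf
  have hcv := hc.trans (hl ▸ coeff_y_sq_transv_eight_nonic a h7 h8)
  obtain ⟨hd0, hd1, hd2, hd4, hd5⟩ := coeffs_transv_six_nonic a h7 h8 d (hq ▸ hd)
  have syzygy : 5 * d 5 * a 9 = -75 * a 4 * d 0 + 45 * a 5 * d 1 - a 6 * (9 * c + 22 * d 2) := by
    rw [hcv, hd0, hd1, hd2, hd5]
    ring
  refine ⟨syzygy, ?_⟩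
  rintro ⟨hl0, s, hs, rfl⟩
  have hd_eq : ∀ i ≤ 6, d i = if i = 5 then s else 0 := fun i hi ↦ by
    rw [hd i hi, ← pow_one (X 1), coeff_C_mul_X_pow_mul_X_pow]
    exact if_congr (by omega) rfl rfl
  have hc0 : c = 0 := by rw [hc, hl0, coeff_zero]
  simp (disch := norm_num) only [hd_eq, hc0, Nat.reduceEqDiff, reduceIte]
    at hcv hd0 hd1 hd2 hd4 hd5
  exact hs (hd5.trans (nonic_d_five_eq_zero a hcv.symm hd0.symm hd1.symm hd2.symm hd4.symm))
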